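/- For each i ∈ [n], the set S_i = {f ∈ S : f restricts to the identity on X \ X_i and maps X_i into X_i} is a submonoid of S = E(X,P) isomorphic to E(X_i, P_i), the idempotent-generated submonoid of T(X_i, P_i), where X_i is the union of all blocks of size i and P_i the induced partition. -/

import Mathlib

/-!
Restriction to `X_i` is injective and multiplicative on `S_i`, with inverse "extend by the
identity", so the content is that the restriction `g` of `f ∈ S_i` lies in `E(X_i, P_i)`.

If the map that `g` induces on the blocks of `X_i` is not injective, nothing more is needed: every
such blockwise map of the uniform partition `P_i` lies in `E(X_i, P_i)`. A block that is not hit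
serves as scratch space through which blocks are permuted by idempotents that move one block into
another, and the within-block parts are handled by Howie's theorem (every non-injective self-map
of a finite set is a product of idempotents), which is itself the case of singleton blocks.

If the block map of `g` is injective, then `f` permutes the nonempty blocks of `X`. Write
`f = e₁ ⋯ eₖ` with idempotents `eⱼ ∈ T(X,P)`: since the block action of the product is injective,
so is that of `eₖ`, and an injective idempotent is the identity; inductively every `eⱼ` fixes all
blocks, hence preserves `X_i`, and `g` is the product of the idempotents `eⱼ|X_i`.
-/

/-- The semigroup of transformations of `X = Σ q, Fin (n q)` preserving the partition
into the blocks `C_q = {q} × [n_q]`, as a submonoid of the full transformation monoid. -/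
def TXP (m : ℕ) (n : Fin m → ℕ) : Submonoid (Function.End (Σ q : Fin m, Fin (n q))) where
  carrier := {f | ∀ q : Fin m, ∃ r : Fin m, ∀ x : Σ q : Fin m, Fin (n q), x.1 = q → (f x).1 = r}
  one_mem' := fun q => ⟨q, fun _ hx => hx⟩
  mul_mem' := by
    intro a b ha hb q
    obtain ⟨r, hr⟩ := hb q
    obtain ⟨s, hs⟩ := ha r
    exact ⟨s, fun x hx => hs _ (hr x hx)⟩

/-- The submonoid of `T(X,P)` generated by its idempotents. -/
def EXP (m : ℕ) (n : Fin m → ℕ) : Submonoid (Function.End (Σ q : Fin m, Fin (n q))) :=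
  Submonoid.closure {f | f ∈ TXP m n ∧ f * f = f}

/-- The transformation monoid of `X_i = ⋃_{q ∈ M_i} C_q` (blocks of size `i`) preserving the
induced uniform partition `P_i`, where `X_i` is modelled as `{q // n q = i} × Fin i`. -/
def TXPi (m : ℕ) (n : Fin m → ℕ) (i : ℕ) :
    Submonoid (Function.End ({q : Fin m // n q = i} × Fin i)) where
  carrier := {f | ∀ q, ∃ r, ∀ x : {q : Fin m // n q = i} × Fin i, x.1 = q → (f x).1 = r}
  one_mem' := fun q => ⟨q, fun _ hx => hx⟩
  mul_mem' := by
    intro a b ha hb q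
    obtain ⟨r, hr⟩ := hb q
    obtain ⟨s, hs⟩ := ha r
    exact ⟨s, fun x hx => hs _ (hr x hx)⟩

/-- `E(X_i,P_i)`: the idempotent-generated submonoid of `T(X_i,P_i)`. -/
def EXPi (m : ℕ) (n : Fin m → ℕ) (i : ℕ) :
    Submonoid (Function.End ({q : Fin m // n q = i} × Fin i)) :=
  Submonoid.closure {f | f ∈ TXPi m n i ∧ f * f = f}

/-- `S_i = {f ∈ S : f|_{X \ X_i} = id, X_i f ⊆ X_i}`, where `X_i` is the union of the blocks
of size `i`. -/
def SiSet (m : ℕ) (n : Fin m → ℕ) (i : ℕ) : Set (Function.End (Σ q : Fin m, Fin (n q))) :=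
  {f | f ∈ EXP m n ∧ (∀ x : Σ q : Fin m, Fin (n q), n x.1 ≠ i → f x = x) ∧
    (∀ x : Σ q : Fin m, Fin (n q), n x.1 = i → n (f x).1 = i)}

open Function

lemma Function.End.eq_one_of_isIdempotentElem_of_injective {α : Type*} {e : Function.End α}
    (he : IsIdempotentElem e) (hinj : Injective e) : e = 1 :=
  funext fun x => hinj (congrFun he x)

theorem Submonoid.mem_closure_map_eq_one_of_injective {M α : Type*} [Monoid M]
    (φ : M →* Function.End α) {s : Set M} (hs : ∀ e ∈ s, IsIdempotentElem e) {f : M}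
    (hf : f ∈ closure s) (hinj : Injective (φ f)) : f ∈ closure {e ∈ s | φ e = 1} := by
  have hker : ∀ y ∈ closure {e ∈ s | φ e = 1}, φ y = 1 := fun y hy =>
    (closure_le (S := MonoidHom.mker φ)).mpr (fun e he => he.2) hy
  induction hf using closure_induction_left with
  | one => exact one_mem _
  | mul_left x hx y _ ih =>
    rw [map_mul] at hinj
    have hy := ih (Injective.of_comp hinj)
    rw [hker y hy, mul_one] at hinj
    have hx1 : φ x = 1 :=
      Function.End.eq_one_of_isIdempotentElem_of_injective ((hs x hx).map φ) hinj
    exact mul_mem (subset_closure ⟨hx, hx1⟩) hy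

@[simp] lemma Function.End.mul_apply {α : Type*} (f g : Function.End α) (x : α) :
    (f * g) x = f (g x) := rfl

@[simp] lemma Function.End.one_apply {α : Type*} (x : α) : (1 : Function.End α) x = x := rfl

variable (α : Type*) in
def Function.End.idempotentGenerated : Submonoid (Function.End α) :=
  Submonoid.closure {e | IsIdempotentElem e}

open Function.End

section UniformBlocks

variable {J F : Type*}

def IsBlockwise (f : Function.End (J × F)) : Prop :=
  ∀ j, ∃ r, ∀ p : J × F, p.1 = j → (f p).1 = r

variable (J F) in
def blockIdempotentGenerated : Submonoid (Function.End (J × F)) :=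
  Submonoid.closure {f | IsBlockwise f ∧ IsIdempotentElem f}

def blockMap (τ : J → J) (G : J → Function.End F) : Function.End (J × F) :=
  fun p => (τ p.1, G p.1 p.2)

@[simp] lemma blockMap_apply (τ : J → J) (G : J → Function.End F) (j : J) (v : F) :
    blockMap τ G (j, v) = (τ j, G j v) := rfl

lemma IsBlockwise.eq_blockMap {g : Function.End (J × F)} (hg : IsBlockwise g) (x₀ : F) :
    g = blockMap (fun j => (g (j, x₀)).1) (fun j v => (g (j, v)).2) := by
  funext p
  obtain ⟨r, hr⟩ := hg p.1
  exact Prod.ext ((hr p rfl).trans (hr (p.1, x₀) rfl).symm) rfl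

def blockPerm : Equiv.Perm J →* Function.End (J × F) where
  toFun π := blockMap π 1
  map_one' := rfl
  map_mul' _ _ := rfl

def blockDiag : (J → Function.End F) →* Function.End (J × F) where
  toFun W := blockMap id W
  map_one' := rfl
  map_mul' _ _ := rfl

@[simp] lemma blockPerm_apply (π : Equiv.Perm J) : blockPerm π = blockMap (F := F) π 1 := rfl

@[simp] lemma blockDiag_apply (W : J → Function.End F) : blockDiag W = blockMap id W := rfl

variable (F) in
/-- The block `z` is scratch space: its contents may be overwritten. -/
def realizableOffHole (z : J) : Submonoid (Function.End (J × F)) where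
  carrier := {f | (∀ p, p.1 ≠ z → (f p).1 ≠ z) ∧
    ∃ V ∈ blockIdempotentGenerated J F, ∀ p, p.1 ≠ z → V p = f p}
  one_mem' := ⟨fun _ hp => hp, 1, one_mem _, fun _ _ => rfl⟩
  mul_mem' := by
    rintro f g ⟨hf, V, hV, hVf⟩ ⟨hg, W, hW, hWg⟩
    refine ⟨fun p hp => hf _ (hg p hp), V * W, mul_mem hV hW, fun p hp => ?_⟩
    simp only [Function.End.mul_apply, hWg p hp, hVf _ (hg p hp)]

variable [DecidableEq J]

def moveBlock (c d : J) (w : Function.End F) : Function.End (J × F) :=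
  fun p => if p.1 = c then (d, w p.2) else p

@[simp] lemma moveBlock_apply (c d : J) (w : Function.End F) (j : J) (v : F) :
    moveBlock c d w (j, v) = if j = c then (d, w v) else (j, v) := rfl

lemma isBlockwise_moveBlock (c d : J) (w : Function.End F) : IsBlockwise (moveBlock c d w) :=
  fun j => ⟨if j = c then d else j, fun p hp => by
    by_cases hj : j = c <;> simp [moveBlock, hp, hj]⟩

lemma moveBlock_mem {c d : J} (hdc : d ≠ c) (w : Function.End F) :
    moveBlock c d w ∈ blockIdempotentGenerated J F := by
  refine Submonoid.subset_closure ⟨isBlockwise_moveBlock c d w, ?_⟩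
  funext ⟨j, v⟩
  by_cases hj : j = c <;> simp [hj, hdc]

def onBlock (c : J) : Function.End F →* Function.End (J × F) where
  toFun := moveBlock c c
  map_one' := by
    funext ⟨j, v⟩
    by_cases hj : j = c <;> simp [hj]
  map_mul' u v := by
    funext ⟨j, v⟩
    by_cases hj : j = c <;> simp [hj]

@[simp] lemma onBlock_apply (c : J) (w : Function.End F) : onBlock c w = moveBlock c c w := rfl

lemma blockDiag_mulSingle (c : J) (w : Function.End F) :
    blockDiag (Pi.mulSingle c w) = onBlock c w := by
  funext ⟨j, v⟩
  by_cases hj : j = c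
  · subst hj; simp
  · simp [hj]

lemma onBlock_mem {c : J} {w : Function.End F} (hw : w ∈ idempotentGenerated F) :
    onBlock c w ∈ blockIdempotentGenerated J F := by
  induction hw using Submonoid.closure_induction with
  | mem e he =>
    exact Submonoid.subset_closure ⟨isBlockwise_moveBlock c c e, he.map (onBlock c)⟩
  | one => rw [map_one]; exact one_mem _
  | mul u v _ _ hu hv => rw [map_mul]; exact mul_mem hu hv

lemma onBlock_mem_realizableOffHole (z c : J) (w : Function.End F) :
    onBlock c w ∈ realizableOffHole F z := by
  refine ⟨fun ⟨j, v⟩ hj => by by_cases hjc : j = c <;> simp_all, ?_⟩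
  by_cases hcz : c = z
  · refine ⟨1, one_mem _, fun ⟨j, v⟩ hj => ?_⟩
    simp [hcz, hj]
  · refine ⟨moveBlock z c 1 * moveBlock c z w,
      mul_mem (moveBlock_mem hcz 1) (moveBlock_mem (Ne.symm hcz) w), fun ⟨j, v⟩ hj => ?_⟩
    by_cases hjc : j = c
    · subst hjc; simp
    · simp [hj, hjc]

lemma blockPerm_swap_mem_realizableOffHole {z a b : J} (ha : a ≠ z) (hb : b ≠ z)
    (hab : a ≠ b) :
    blockPerm (Equiv.swap a b) ∈ realizableOffHole F z := by
  refine ⟨fun ⟨j, v⟩ hj => ?_, moveBlock z b 1 * moveBlock b a 1 * moveBlock a z 1,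
    mul_mem (mul_mem (moveBlock_mem hb 1) (moveBlock_mem hab 1)) (moveBlock_mem (Ne.symm ha) 1),
    fun ⟨j, v⟩ hj => ?_⟩
  · simp only [blockPerm_apply, blockMap_apply]
    rcases eq_or_ne j a with rfl | hja
    · simpa using hb
    rcases eq_or_ne j b with rfl | hjb
    · simpa using ha
    simpa [Equiv.swap_apply_of_ne_of_ne hja hjb] using hj
  · rcases eq_or_ne j a with rfl | hja
    · simp [Ne.symm hb]
    rcases eq_or_ne j b with rfl | hjb
    · simp [hja, ha]
    simp [hja, hjb, hj, Equiv.swap_apply_of_ne_of_ne hja hjb]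

lemma blockDiag_mem_realizableOffHole [Fintype J] (z : J) (W : J → Function.End F) :
    blockDiag W ∈ realizableOffHole F z := by
  rw [← Finset.noncommProd_mulSingle W, ← Submonoid.mem_comap]
  exact Submonoid.noncommProd_mem _ _ _ _ fun c _ => by
    rw [Submonoid.mem_comap, blockDiag_mulSingle]
    exact onBlock_mem_realizableOffHole z c (W c)

lemma blockPerm_mem_realizableOffHole [Finite J] {z : J} {π : Equiv.Perm J} (hπ : π z = z) :
    blockPerm π ∈ realizableOffHole F z := by
  have hπ' : ∀ j, π j ≠ z ↔ j ≠ z := fun j => (π.injective.ne_iff' hπ)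
  rw [← Equiv.Perm.ofSubtype_subtypePerm (p := (· ≠ z)) (f := π) hπ' fun j hj => by
    rintro rfl; exact hj hπ]
  generalize π.subtypePerm (p := (· ≠ z)) hπ' = σ
  induction σ using Equiv.Perm.swap_induction_on with
  | one => rw [map_one, map_one]; exact one_mem _
  | swap_mul σ x y hxy ih =>
    rw [map_mul, Equiv.Perm.ofSubtype_swap_eq, map_mul]
    exact mul_mem (blockPerm_swap_mem_realizableOffHole x.2 y.2 (Subtype.coe_ne_coe.mpr hxy)) ih

lemma exists_mem_eq_blockMap_off_hole [Fintype J] {z : J} {π : Equiv.Perm J} (hπ : π z = z)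
    (W : J → Function.End F) :
    ∃ V ∈ blockIdempotentGenerated J F, ∀ j v, j ≠ z → V (j, v) = (π j, W j v) := by
  obtain ⟨-, V, hV, hVeq⟩ :=
    mul_mem (blockPerm_mem_realizableOffHole hπ) (blockDiag_mem_realizableOffHole z W)
  exact ⟨V, hV, fun j v hj => hVeq (j, v) hj⟩

lemma blockMap_update_mem [Fintype J]
    (hF : ∀ g : Function.End F, ∃ (u : (Function.End F)ˣ) (k : Function.End F),
      k ∈ idempotentGenerated F ∧ g = u * k)
    {π : Equiv.Perm J} {z y : J} (hπ : π z = z) (hyz : y ≠ z) (G : J → Function.End F) :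
    blockMap (update π z (π y)) G ∈ blockIdempotentGenerated J F := by
  obtain ⟨u, k, hk, hGy⟩ := hF (G y)
  obtain ⟨V, hV, hVeq⟩ := exists_mem_eq_blockMap_off_hole hπ (update G y ↑u)
  have hu : ∀ v, (u : Function.End F) ((↑u⁻¹ : Function.End F) v) = v := congrFun u.mul_inv
  -- block `z` is first merged into block `y`, after which both follow `y`
  have key : blockMap (update π z (π y)) G =
      V * moveBlock z y ((↑u⁻¹ : Function.End F) * G z) * onBlock y k := by
    funext ⟨j, v⟩
    by_cases hjz : j = z
    · simp [hjz, hVeq _ _ hyz, Ne.symm hyz, hu]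
    by_cases hjy : j = y
    · simp [hjy, hVeq _ _ hyz, hyz, hGy]
    · simp [hVeq _ _ hjz, hjz, hjy]
  rw [key]
  exact mul_mem (mul_mem hV (moveBlock_mem hyz _)) (onBlock_mem hk)

lemma blockMap_eq_moveBlock_mul {τ : J → J} {z : J} (hz : ∀ j, τ j ≠ z)
    (G : J → Function.End F) :
    blockMap τ G = moveBlock z (τ z) (G z) * blockMap (update τ z z) (update G z 1) := by
  funext ⟨j, v⟩
  rcases eq_or_ne j z with rfl | hjz
  · simp
  · simp [hjz, hz j]

lemma card_filter_update_self_lt [Fintype J] {τ : J → J} {z : J} (hz : τ z ≠ z) :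
    (Finset.univ.filter fun j => update τ z z j ≠ j).card <
      (Finset.univ.filter fun j => τ j ≠ j).card := by
  refine Finset.card_lt_card
    ((Finset.ssubset_iff_of_subset fun j => ?_).mpr ⟨z, by simpa, by simp⟩)
  by_cases hj : j = z <;> simp [hj]

/-- The hypothesis on `F` is Howie's theorem for `F`; it is trivial for `F = Unit`, and that case
yields Howie's theorem itself. -/
theorem blockMap_mem_of_not_injective_of_forall_eq_mul [Fintype J]
    (hF : ∀ g : Function.End F, ∃ (u : (Function.End F)ˣ) (k : Function.End F),
      k ∈ idempotentGenerated F ∧ g = u * k)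
    {τ : J → J} (hτ : ¬ Injective τ) (G : J → Function.End F) :
    blockMap τ G ∈ blockIdempotentGenerated J F := by
  induction hcard : (Finset.univ.filter fun j => τ j ≠ j).card using Nat.strong_induction_on
    generalizing τ G with
  | _ k ih =>
  obtain ⟨z, hz⟩ : ∃ z, ∀ j, τ j ≠ z := by
    simpa [Surjective] using mt Finite.injective_iff_surjective.mpr hτ
  by_cases hτ' : Injective (update τ z z)
  · let π := Equiv.ofBijective _ (Finite.injective_iff_bijective.mp hτ')
    obtain ⟨y, hy⟩ := π.surjective (τ z)
    have hyz : y ≠ z := fun h => hz z (by simpa [π, h] using hy.symm)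
    have hτπ : τ = update π z (π y) := by
      rw [hy]
      simp [π]
    rw [hτπ]
    exact blockMap_update_mem hF (by simp [π]) hyz G
  · rw [blockMap_eq_moveBlock_mul hz]
    exact mul_mem (moveBlock_mem (hz z) _)
      (ih _ (hcard ▸ card_filter_update_self_lt (hz z)) hτ' _ rfl)

end UniformBlocks

/-- Howie's theorem, obtained as the case of singleton blocks. -/
theorem Function.End.mem_idempotentGenerated_of_not_injective {α : Type*} [Finite α]
    {g : Function.End α} (hg : ¬ Injective g) : g ∈ idempotentGenerated α := by
  classical
  have := Fintype.ofFinite α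
  let Φ : Function.End (α × Unit) →* Function.End α :=
    { toFun f a := (f (a, ())).1, map_one' := rfl, map_mul' _ _ := rfl }
  have hΦ : (blockIdempotentGenerated α Unit).map Φ ≤ idempotentGenerated α := by
    rw [blockIdempotentGenerated, MonoidHom.map_mclosure]
    exact Submonoid.closure_mono (by rintro _ ⟨f, ⟨-, hf⟩, rfl⟩; exact hf.map Φ)
  have hUnit : ∀ u : Function.End Unit, ∃ (v : (Function.End Unit)ˣ) (k : Function.End Unit),
      k ∈ idempotentGenerated Unit ∧ u = v * k :=
    fun u => ⟨1, 1, one_mem _, funext fun _ => rfl⟩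
  exact hΦ ⟨blockMap g 1, blockMap_mem_of_not_injective_of_forall_eq_mul hUnit hg 1, rfl⟩

theorem Function.End.exists_eq_units_mul_mem_idempotentGenerated {α : Type*} [Finite α]
    (g : Function.End α) :
    ∃ (u : (Function.End α)ˣ) (k : Function.End α),
      k ∈ idempotentGenerated α ∧ g = u * k := by
  by_cases hg : Injective g
  · exact ⟨Equiv.Perm.equivUnitsEnd (Equiv.ofBijective g (Finite.injective_iff_bijective.mp hg)),
      1, one_mem _, rfl⟩
  · exact ⟨1, g, mem_idempotentGenerated_of_not_injective hg, (one_mul g).symm⟩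

theorem blockMap_mem_of_not_injective {J F : Type*} [Finite J] [Finite F]
    {τ : J → J} (hτ : ¬ Injective τ) (G : J → Function.End F) :
    blockMap τ G ∈ blockIdempotentGenerated J F := by
  classical
  have := Fintype.ofFinite J
  exact blockMap_mem_of_not_injective_of_forall_eq_mul
    exists_eq_units_mul_mem_idempotentGenerated hτ G

section Restriction

variable {X Y : Type*} {P : X → Prop} [DecidablePred P] (e : Y ≃ Subtype P)

/-- The restriction of `f` to the subset `P`, transported to `Y`; it is meaningful only when `f`
maps `P` into itself. -/
def restrictEnd (f : Function.End X) : Function.End Y :=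
  fun y => if h : P (f (e y)) then e.symm ⟨f (e y), h⟩ else y

def extendEnd (g : Function.End Y) : Function.End X :=
  fun x => if h : P x then e (g (e.symm ⟨x, h⟩)) else x

lemma extendEnd_apply_of_not {x : X} (h : ¬ P x) (g : Function.End Y) : extendEnd e g x = x :=
  dif_neg h

lemma extendEnd_apply_of {x : X} (h : P x) (g : Function.End Y) :
    extendEnd e g x = e (g (e.symm ⟨x, h⟩)) :=
  dif_pos h

lemma extendEnd_one : extendEnd e (1 : Function.End Y) = 1 := by
  funext x
  by_cases h : P x <;> simp [extendEnd, h]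

lemma extendEnd_mul (g g' : Function.End Y) :
    extendEnd e (g * g') = extendEnd e g * extendEnd e g' := by
  funext x
  by_cases h : P x <;> simp [extendEnd, h, (e _).2]

lemma restrictEnd_one : restrictEnd e (1 : Function.End X) = 1 := by
  funext y
  simp [restrictEnd, (e y).2]

lemma restrictEnd_extendEnd (g : Function.End Y) : restrictEnd e (extendEnd e g) = g := by
  funext y
  simp [restrictEnd, extendEnd, (e _).2]

variable {e}

lemma coe_restrictEnd_apply {f : Function.End X} (hf : ∀ x, P x → P (f x)) (y : Y) :
    (e (restrictEnd e f y) : X) = f (e y) := by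
  simp [restrictEnd, hf _ (e y).2]

lemma restrictEnd_mul {f g : Function.End X} (hf : ∀ x, P x → P (f x))
    (hg : ∀ x, P x → P (g x)) : restrictEnd e (f * g) = restrictEnd e f * restrictEnd e g := by
  funext y
  apply e.injective
  apply Subtype.ext
  simp only [coe_restrictEnd_apply (f := f * g) (fun x hx => hf _ (hg x hx)),
    Function.End.mul_apply, coe_restrictEnd_apply hf, coe_restrictEnd_apply hg]

lemma extendEnd_restrictEnd {f : Function.End X} (hfix : ∀ x, ¬ P x → f x = x)
    (hf : ∀ x, P x → P (f x)) : extendEnd e (restrictEnd e f) = f := by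
  funext x
  by_cases h : P x
  · simpa [extendEnd_apply_of e h] using coe_restrictEnd_apply (e := e) hf (e.symm ⟨x, h⟩)
  · rw [extendEnd_apply_of_not e h, hfix x h]

end Restriction

section Partition

variable {m : ℕ} {n : Fin m → ℕ} {i : ℕ}

lemma fst_apply_eq_of_mem_TXP {f : Function.End (Σ q : Fin m, Fin (n q))} (hf : f ∈ TXP m n)
    {x y : Σ q : Fin m, Fin (n q)} (h : x.1 = y.1) : (f x).1 = (f y).1 := by
  obtain ⟨r, hr⟩ := hf x.1
  rw [hr x rfl, hr y h.symm]

lemma EXP_le_TXP : EXP m n ≤ TXP m n :=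
  Submonoid.closure_le.mpr fun _ hf => hf.1

lemma mem_closure_isIdempotentElem_of_mem_EXP {f : Function.End (Σ q : Fin m, Fin (n q))}
    (hf : f ∈ EXP m n) :
    (⟨f, EXP_le_TXP hf⟩ : TXP m n) ∈
      Submonoid.closure {e : TXP m n | IsIdempotentElem e} := by
  have hEXP : EXP m n =
      (Submonoid.closure {e : TXP m n | IsIdempotentElem e}).map (TXP m n).subtype := by
    have himage :
        (TXP m n).subtype '' {e | IsIdempotentElem e} = {f | f ∈ TXP m n ∧ f * f = f} := by
      ext f
      exact ⟨by rintro ⟨g, hg, rfl⟩; exact ⟨g.2, congrArg Subtype.val hg⟩,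
        fun hf => ⟨⟨f, hf.1⟩, Subtype.ext hf.2, rfl⟩⟩
    rw [MonoidHom.map_mclosure, himage]
    rfl
  rw [hEXP] at hf
  obtain ⟨g, hg, rfl⟩ := hf
  exact hg

lemma one_mem_SiSet : (1 : Function.End (Σ q : Fin m, Fin (n q))) ∈ SiSet m n i :=
  ⟨one_mem _, fun _ _ => rfl, fun _ hx => hx⟩

lemma mul_mem_SiSet {a b : Function.End (Σ q : Fin m, Fin (n q))} (ha : a ∈ SiSet m n i)
    (hb : b ∈ SiSet m n i) : a * b ∈ SiSet m n i :=
  ⟨mul_mem ha.1 hb.1, fun x hx => by simp [hb.2.1 x hx, ha.2.1 x hx],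
    fun x hx => ha.2.2 _ (hb.2.2 x hx)⟩

/-- Empty blocks are left out: their image under an element of `T(X,P)` is not determined. -/
def blockAction : TXP m n →* Function.End {q : Fin m // 0 < n q} where
  toFun f q := ⟨(f.1 ⟨q.1, ⟨0, q.2⟩⟩).1, (f.1 ⟨q.1, ⟨0, q.2⟩⟩).2.pos⟩
  map_one' := rfl
  map_mul' f _ := funext fun _ => Subtype.ext (fst_apply_eq_of_mem_TXP f.2 rfl)

lemma fst_apply_eq_of_blockAction_eq_one {f : TXP m n} (hf : blockAction f = 1)
    (x : Σ q : Fin m, Fin (n q)) : (f.1 x).1 = x.1 := by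
  have h : (f.1 ⟨x.1, ⟨0, x.2.pos⟩⟩).1 = x.1 :=
    congrArg Subtype.val (congrFun hf ⟨x.1, x.2.pos⟩)
  exact (fst_apply_eq_of_mem_TXP (x := x) (y := ⟨x.1, ⟨0, x.2.pos⟩⟩) f.2 rfl).trans h

variable (m n i) in
def XiEquiv : {q : Fin m // n q = i} × Fin i ≃ {x : Σ q : Fin m, Fin (n q) // n x.1 = i} where
  toFun p := ⟨⟨p.1, Fin.cast p.1.2.symm p.2⟩, p.1.2⟩
  invFun x := (⟨x.1.1, x.2⟩, Fin.cast x.2 x.1.2)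
  left_inv p := by simp
  right_inv x := by simp

lemma fst_restrictEnd_apply {f : Function.End (Σ q : Fin m, Fin (n q))}
    (hf : ∀ x, n x.1 = i → n (f x).1 = i) (p : {q : Fin m // n q = i} × Fin i) :
    ((restrictEnd (XiEquiv m n i) f p).1 : Fin m) = (f (XiEquiv m n i p)).1 :=
  congrArg Sigma.fst (coe_restrictEnd_apply (e := XiEquiv m n i) hf p)

lemma isBlockwise_restrictEnd [NeZero i] {f : Function.End (Σ q : Fin m, Fin (n q))}
    (hfT : f ∈ TXP m n) (hf : ∀ x, n x.1 = i → n (f x).1 = i) :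
    IsBlockwise (restrictEnd (XiEquiv m n i) f) := fun j =>
  ⟨(restrictEnd (XiEquiv m n i) f (j, 0)).1, fun p hp => Subtype.ext <| by
    rw [fst_restrictEnd_apply hf, fst_restrictEnd_apply hf]
    exact fst_apply_eq_of_mem_TXP hfT (congrArg Subtype.val hp)⟩

lemma restrictEnd_mem_EXPi_of_mem_closure {f : TXP m n}
    (hf : f ∈ Submonoid.closure {e : TXP m n | IsIdempotentElem e ∧ blockAction e = 1}) :
    restrictEnd (XiEquiv m n i) f.1 ∈ EXPi m n i := by
  suffices (∀ x, (f.1 x).1 = x.1) ∧ restrictEnd (XiEquiv m n i) f.1 ∈ EXPi m n i from this.2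
  induction hf using Submonoid.closure_induction with
  | mem e he =>
    have hfix := fst_apply_eq_of_blockAction_eq_one he.2
    have hpres : ∀ x, n x.1 = i → n (e.1 x).1 = i := fun x hx => (hfix x).symm ▸ hx
    refine ⟨hfix, Submonoid.subset_closure ⟨fun j => ⟨j, fun p hp => ?_⟩, ?_⟩⟩
    · exact Subtype.ext ((fst_restrictEnd_apply hpres p).trans
        ((hfix _).trans (congrArg Subtype.val hp)))
    · show restrictEnd (XiEquiv m n i) e.1 * restrictEnd (XiEquiv m n i) e.1 =
        restrictEnd (XiEquiv m n i) e.1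
      rw [← restrictEnd_mul hpres hpres]
      exact congrArg (restrictEnd (XiEquiv m n i) ·) (congrArg Subtype.val he.1)
  | one => exact ⟨fun _ => rfl, by rw [Submonoid.coe_one, restrictEnd_one]; exact one_mem _⟩
  | mul a b _ _ ha hb =>
    refine ⟨fun x => (ha.1 _).trans (hb.1 x), ?_⟩
    rw [Submonoid.coe_mul, restrictEnd_mul (fun x hx => (ha.1 x).symm ▸ hx)
      (fun x hx => (hb.1 x).symm ▸ hx)]
    exact mul_mem ha.2 hb.2

lemma blockAction_surjective [NeZero i] {f : Function.End (Σ q : Fin m, Fin (n q))}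
    (hf : f ∈ SiSet m n i) (hτ : Injective fun j => (restrictEnd (XiEquiv m n i) f (j, 0)).1) :
    Surjective (blockAction ⟨f, EXP_le_TXP hf.1⟩) := by
  rintro ⟨q, hq⟩
  by_cases hqi : n q = i
  · obtain ⟨j, hj⟩ := Finite.injective_iff_surjective.mp hτ ⟨q, hqi⟩
    refine ⟨⟨j.1, by rw [j.2]; exact Nat.pos_of_neZero i⟩, Subtype.ext ?_⟩
    calc (f ⟨j.1, ⟨0, _⟩⟩).1 = (f (XiEquiv m n i (j, 0))).1 :=
          fst_apply_eq_of_mem_TXP (EXP_le_TXP hf.1) rfl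
      _ = q := (fst_restrictEnd_apply hf.2.2 _).symm.trans (congrArg Subtype.val hj)
  · exact ⟨⟨q, hq⟩, Subtype.ext (congrArg Sigma.fst (hf.2.1 ⟨q, ⟨0, hq⟩⟩ hqi))⟩

theorem restrictEnd_mem_EXPi {f : Function.End (Σ q : Fin m, Fin (n q))} (hf : f ∈ SiSet m n i) :
    restrictEnd (XiEquiv m n i) f ∈ EXPi m n i := by
  rcases Nat.eq_zero_or_pos i with rfl | hi
  · rw [show restrictEnd (XiEquiv m n 0) f = 1 from funext fun p => p.2.elim0]
    exact one_mem _
  have := NeZero.of_pos hi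
  by_cases hτ : Injective fun j => (restrictEnd (XiEquiv m n i) f (j, 0)).1
  · exact restrictEnd_mem_EXPi_of_mem_closure <|
      Submonoid.mem_closure_map_eq_one_of_injective blockAction (fun _ he => he)
        (mem_closure_isIdempotentElem_of_mem_EXP hf.1)
        (Finite.injective_iff_surjective.mpr (blockAction_surjective hf hτ))
  · rw [(isBlockwise_restrictEnd (EXP_le_TXP hf.1) hf.2.2).eq_blockMap 0]
    exact blockMap_mem_of_not_injective hτ _

lemma extendEnd_mem_TXP {g : Function.End ({q : Fin m // n q = i} × Fin i)}
    (hg : g ∈ TXPi m n i) : extendEnd (XiEquiv m n i) g ∈ TXP m n := by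
  intro q
  by_cases hq : n q = i
  · obtain ⟨r, hr⟩ := hg ⟨q, hq⟩
    refine ⟨r.1, fun x hx => ?_⟩
    rw [extendEnd_apply_of (XiEquiv m n i) (show n x.1 = i by rw [hx]; exact hq)]
    exact congrArg Subtype.val (hr _ (Subtype.ext hx))
  · refine ⟨q, fun x hx => ?_⟩
    rw [extendEnd_apply_of_not (XiEquiv m n i) (show ¬ n x.1 = i by rw [hx]; exact hq)]
    exact hx

lemma extendEnd_mem_SiSet {g : Function.End ({q : Fin m // n q = i} × Fin i)}
    (hg : g ∈ EXPi m n i) : extendEnd (XiEquiv m n i) g ∈ SiSet m n i := by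
  refine ⟨?_, fun x hx => extendEnd_apply_of_not (XiEquiv m n i) hx g,
    fun x hx => by rw [extendEnd_apply_of (XiEquiv m n i) hx]; exact (XiEquiv m n i _).2⟩
  induction hg using Submonoid.closure_induction with
  | mem g hg =>
    exact Submonoid.subset_closure ⟨extendEnd_mem_TXP hg.1, by rw [← extendEnd_mul, hg.2]⟩
  | one => rw [extendEnd_one]; exact one_mem _
  | mul g g' _ _ hg hg' => rw [extendEnd_mul]; exact mul_mem hg hg'

end Partition

/-- For each `i`, `S_i` is a submonoid of `S = E(X,P)` isomorphic (as a monoid) to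
`E(X_i, P_i)`. -/
theorem Si_submonoid_iso_EXPi (m : ℕ) (n : Fin m → ℕ) (i : ℕ) :
    ((1 : Function.End (Σ q : Fin m, Fin (n q))) ∈ SiSet m n i ∧
      ∀ a ∈ SiSet m n i, ∀ b ∈ SiSet m n i, a * b ∈ SiSet m n i) ∧
    ∃ φ : Function.End (Σ q : Fin m, Fin (n q)) →
        Function.End ({q : Fin m // n q = i} × Fin i),
      Set.BijOn φ (SiSet m n i) (EXPi m n i : Set _) ∧
      (∀ a ∈ SiSet m n i, ∀ b ∈ SiSet m n i, φ (a * b) = φ a * φ b) ∧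
      φ 1 = 1 := by
  have hinv : Set.InvOn (extendEnd (XiEquiv m n i)) (restrictEnd (XiEquiv m n i))
      (SiSet m n i) (EXPi m n i) :=
    ⟨fun f hf => extendEnd_restrictEnd hf.2.1 hf.2.2, fun g _ => restrictEnd_extendEnd _ g⟩
  refine ⟨⟨one_mem_SiSet, fun a ha b hb => mul_mem_SiSet ha hb⟩, restrictEnd (XiEquiv m n i),
    hinv.bijOn (fun f hf => restrictEnd_mem_EXPi hf) (fun g hg => extendEnd_mem_SiSet hg),
    fun a ha b hb => restrictEnd_mul ha.2.2 hb.2.2, restrictEnd_one _⟩
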